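/- arXiv:1702.06967 — 3 statements merged into one kernel-verified Lean document; each statement's English description precedes it below -/
import Mathlib

section
/- (Second type of move, case ρ̂_1 = 0.) Let g ≥ 2 be an integer, let a_•, b_•, c_• be vanishing sequences of rank r and degree d, and let a²_• be the vanishing sequence complementary to c_•, i.e. a²_j = d − c_{r−j}. Suppose ρ̂(g,d;a_•,b_•) ≥ 1, ρ̂(1,d;a_•,c_•) = 0, ρ̂(g−1,d;a²_•,b_•) = 0, and that every index j with a_j + c_{r−j} = d satisfies a²_j + b_{r−j} ≥ d − (g−1). Then: (i) there exists an index j with a²_j + b_{r−j} > d − (g−1) and a_j + c_{r−j} < d − 1; (ii) letting j_0 be the minimal index at which a²_j + b_{r−j} attains its maximum value among indices j with a_j + c_{r−j} < d − 1, one has a²_{j_0} + b_{r−j_0} > d − (g−1), and either j_0 = 0 or a²_{j_0−1} < a²_{j_0} − 1; and (iii) the sequences c′_• obtained from c_• by replacing c_{r−j_0} with c_{r−j_0} + 1, and a²′_• obtained from a²_• by replacing a²_{j_0} with a²_{j_0} − 1, are complementary vanishing sequences of rank r and degree d satisfying ρ̂(1,d;a_•,c′_•) ≥ 0 and ρ̂(g−1,d;a²′_•,b_•)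 > 0. -/
/-- `a` is a vanishing sequence of rank `r` and degree `d`: a strictly increasing
sequence of integers `0 ≤ a 0 < a 1 < ⋯ < a r ≤ d`. -/
def IsVanishingSeq (r : ℕ) (d : ℤ) (a : Fin (r + 1) → ℤ) : Prop :=
  StrictMono a ∧ 0 ≤ a 0 ∧ a (Fin.last r) ≤ d

/-- The Brill–Noether number `ρ(g,d;a,b) = g - ∑ⱼ (aⱼ + b_{r-j} - (d - g))`. -/
def BNrho (g : ℤ) (r : ℕ) (d : ℤ) (a b : Fin (r + 1) → ℤ) : ℤ :=
  g - ∑ j : Fin (r + 1), (a j + b j.rev - (d - g))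

/-- The adjusted Brill–Noether number
`ρ̂(g,d;a,b) = g - ∑ⱼ max (aⱼ + b_{r-j} - (d - g)) 0`. -/
def BNrhoHat (g : ℤ) (r : ℕ) (d : ℤ) (a b : Fin (r + 1) → ℤ) : ℤ :=
  g - ∑ j : Fin (r + 1), max (a j + b j.rev - (d - g)) 0

/-!
Put `xⱼ = aⱼ + c_{r-j} - (d - 1)` and `yⱼ = a²ⱼ + b_{r-j} - (d - (g - 1))`. Complementarity of
`c` and `a²` gives `aⱼ + b_{r-j} - (d - g) = xⱼ + yⱼ`, so the hypotheses read
`∑ max x 0 = 1`, `∑ max y 0 = g - 1` and `∑ max (x + y) 0 ≤ g - 1`. The first forces an index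
with `xⱼ = 1`, where `yⱼ ≥ 0`; if no index had `yⱼ > 0` and `xⱼ < 0`, then
`max y 0 ≤ max (x + y) 0` termwise, strictly at that index, which contradicts the sums.

If the minimal maximiser `j₀` had `a²_{j₀-1} = a²_{j₀} - 1`, then `c_{r-j₀+1} = c_{r-j₀} + 1`, so
`j₀ - 1` would also satisfy `x < 0`, with at least the same value of `a² + b`. Hence `a²_{j₀}` can be
lowered by one (and `c_{r-j₀}` raised by one): since `x_{j₀} < 0` this leaves the first sum
unchanged, and since `y_{j₀} > 0` it lowers the second sum by one.
-/

open Function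

namespace IsVanishingSeq

variable {r : ℕ} {d : ℤ} {a : Fin (r + 1) → ℤ}

theorem complement (ha : IsVanishingSeq r d a) : IsVanishingSeq r d (fun j => d - a j.rev) := by
  obtain ⟨hmono, h0, hlast⟩ := ha
  refine ⟨fun i j hij => ?_, ?_, ?_⟩
  · simpa using hmono (Fin.rev_lt_rev.mpr hij)
  · simpa using hlast
  · simpa using h0

theorem update_sub_one (ha : IsVanishingSeq r d a) {k : Fin (r + 1)} (hk : 1 ≤ a k)
    (hgap : ∀ i : Fin (r + 1), (i : ℕ) + 1 = k → a i < a k - 1) :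
    IsVanishingSeq r d (update a k (a k - 1)) := by
  obtain ⟨hmono, h0, hlast⟩ := ha
  refine ⟨Fin.strictMono_iff_lt_succ.mpr fun i => ?_, ?_, ?_⟩
  · have hlt := hmono (Fin.castSucc_lt_succ (i := i))
    rw [update_apply, update_apply]
    split_ifs with hi hi' hi'
    · exact absurd (hi.trans hi'.symm) (Fin.castSucc_lt_succ (i := i)).ne
    · subst hi; omega
    · subst hi'; exact hgap _ (by simp)
    · exact hlt
  · rw [update_apply]; split_ifs with h <;> [subst h; skip] <;> omega
  · rw [update_apply]; split_ifs with h <;> [rw [← h]; skip] <;> omega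

end IsVanishingSeq

section BNrhoHat

variable {g : ℤ} {r : ℕ} {d : ℤ} {a b : Fin (r + 1) → ℤ}

theorem BNrhoHat_comm : BNrhoHat g r d a b = BNrhoHat g r d b a := by
  unfold BNrhoHat
  congr 1
  exact Fintype.sum_equiv Fin.revPerm _ _ fun j => by simp [add_comm]

theorem BNrhoHat_update_left (k : Fin (r + 1)) (v : ℤ) :
    BNrhoHat g r d (update a k v) b + max (v + b k.rev - (d - g)) 0 =
      BNrhoHat g r d a b + max (a k + b k.rev - (d - g)) 0 := by
  unfold BNrhoHat
  rw [← Finset.add_sum_erase _ _ (Finset.mem_univ k),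
    ← Finset.add_sum_erase _ (fun j => max (a j + b j.rev - (d - g)) 0) (Finset.mem_univ k),
    Finset.sum_congr rfl fun j hj => by rw [update_of_ne (Finset.ne_of_mem_erase hj)],
    update_self]
  ring

theorem BNrhoHat_update_add_one {k : Fin (r + 1)} (hk : a k + b k.rev < d - g) :
    BNrhoHat g r d (update a k (a k + 1)) b = BNrhoHat g r d a b := by
  have := BNrhoHat_update_left (g := g) (d := d) (a := a) (b := b) k (a k + 1)
  rw [max_eq_right (by omega), max_eq_right (by omega)] at this
  omega

theorem BNrhoHat_update_sub_one {k : Fin (r + 1)} (hk : d - g < a k + b k.rev) :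
    BNrhoHat g r d (update a k (a k - 1)) b = BNrhoHat g r d a b + 1 := by
  have := BNrhoHat_update_left (g := g) (d := d) (a := a) (b := b) k (a k - 1)
  rw [max_eq_left (by omega), max_eq_left (by omega)] at this
  omega

theorem add_le_of_BNrhoHat_nonneg (h : 0 ≤ BNrhoHat g r d a b) (j : Fin (r + 1)) :
    a j + b j.rev ≤ d := by
  unfold BNrhoHat at h
  have := Finset.single_le_sum (f := fun i => max (a i + b i.rev - (d - g)) 0)
    (fun i _ => le_max_right _ _) (Finset.mem_univ j)
  linarith [le_max_left (a j + b j.rev - (d - g)) 0]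

theorem exists_lt_of_BNrhoHat_lt (h : BNrhoHat g r d a b < g) :
    ∃ j, d - g < a j + b j.rev := by
  by_contra! hle
  unfold BNrhoHat at h
  rw [Finset.sum_eq_zero fun j _ => max_eq_right (by linarith [hle j])] at h
  simp at h

end BNrhoHat

theorem exists_pos_neg_of_sum_max_add_le {ι : Type*} [Fintype ι] (x y : ι → ℤ)
    (hsum : ∑ i, max (x i + y i) 0 ≤ ∑ i, max (y i) 0) (hpos : ∃ j, 0 < x j ∧ 0 ≤ y j) :
    ∃ j, 0 < y j ∧ x j < 0 := by
  by_contra! hneg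
  obtain ⟨j, hxj, hyj⟩ := hpos
  refine hsum.not_gt (Finset.sum_lt_sum (fun i _ => ?_) ⟨j, Finset.mem_univ j, ?_⟩)
  · rcases le_or_gt (y i) 0 with hy | hy
    · exact (max_eq_right hy).trans_le (le_max_right _ _)
    · exact max_le_max_right 0 (by linarith [hneg i hy])
  · rw [max_eq_left hyj, max_eq_left (by linarith)]
    linarith

section SecondMove

variable {r : ℕ} {d g : ℤ} {a b c a₂ : Fin (r + 1) → ℤ}

theorem exists_index_of_BNrhoHat_eq_zero (ha₂def : ∀ j : Fin (r + 1), a₂ j = d - c j.rev)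
    (hρ : 1 ≤ BNrhoHat g r d a b)
    (hρ₁ : BNrhoHat 1 r d a c = 0) (hρ₂ : BNrhoHat (g - 1) r d a₂ b = 0)
    (hcond : ∀ j : Fin (r + 1), a j + c j.rev = d → d - (g - 1) ≤ a₂ j + b j.rev) :
    ∃ j : Fin (r + 1), d - (g - 1) < a₂ j + b j.rev ∧ a j + c j.rev < d - 1 := by
  have hsum : ∑ j, max ((a j + c j.rev - (d - 1)) + (a₂ j + b j.rev - (d - (g - 1)))) 0
      ≤ ∑ j, max (a₂ j + b j.rev - (d - (g - 1))) 0 := by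
    simp only [BNrhoHat] at hρ hρ₂
    have hsplit : ∀ j, (a j + c j.rev - (d - 1)) + (a₂ j + b j.rev - (d - (g - 1))) =
        a j + b j.rev - (d - g) := fun j => by rw [ha₂def]; ring
    simp only [hsplit]
    linarith
  have hpos : ∃ j, 0 < a j + c j.rev - (d - 1) ∧ 0 ≤ a₂ j + b j.rev - (d - (g - 1)) := by
    obtain ⟨j, hj⟩ := exists_lt_of_BNrhoHat_lt (hρ₁.trans_lt one_pos)
    have hle := add_le_of_BNrhoHat_nonneg hρ₁.ge j
    exact ⟨j, by omega, by linarith [hcond j (by omega)]⟩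
  obtain ⟨j, hy, hx⟩ := exists_pos_neg_of_sum_max_add_le _ _ hsum hpos
  exact ⟨j, by omega, by omega⟩

theorem pred_lt_sub_one_of_minimal_argmax (ha : StrictMono a) (hb : StrictMono b)
    (ha₂ : StrictMono a₂) (ha₂def : ∀ j : Fin (r + 1), a₂ j = d - c j.rev) {j₀ : Fin (r + 1)}
    (hj₀ : a j₀ + c j₀.rev < d - 1)
    (hmax : ∀ j : Fin (r + 1), a j + c j.rev < d - 1 → a₂ j + b j.rev ≤ a₂ j₀ + b j₀.rev)
    (hmin : ∀ j : Fin (r + 1), a j + c j.rev < d - 1 →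
      a₂ j + b j.rev = a₂ j₀ + b j₀.rev → j₀ ≤ j)
    (i : Fin (r + 1)) (hi : (i : ℕ) + 1 = j₀) : a₂ i < a₂ j₀ - 1 := by
  by_contra! hge
  have hij : i < j₀ := Fin.lt_def.mpr (by omega)
  have := ha₂ hij
  have := ha hij
  have := hb (Fin.rev_lt_rev.mpr hij)
  have := ha₂def i
  have := ha₂def j₀
  -- `a₂ i = a₂ j₀ - 1` means `c i.rev = c j₀.rev + 1`, so `i` competes with `j₀` and ties with it.
  have hadm : a i + c i.rev < d - 1 := by omega
  exact hij.not_ge (hmin i hadm (le_antisymm (hmax i hadm) (by omega)))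

end SecondMove

theorem second_move_zero_general (r : ℕ) (d : ℤ) (g : ℤ)
    (a b c a₂ : Fin (r + 1) → ℤ)
    (ha : IsVanishingSeq r d a) (hb : IsVanishingSeq r d b) (hc : IsVanishingSeq r d c)
    (ha₂def : ∀ j : Fin (r + 1), a₂ j = d - c j.rev)
    (hρ : 1 ≤ BNrhoHat g r d a b)
    (hρ₁ : BNrhoHat 1 r d a c = 0) (hρ₂ : BNrhoHat (g - 1) r d a₂ b = 0)
    (hcond : ∀ j : Fin (r + 1), a j + c j.rev = d → d - (g - 1) ≤ a₂ j + b j.rev) :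
    (∃ j : Fin (r + 1), d - (g - 1) < a₂ j + b j.rev ∧ a j + c j.rev < d - 1) ∧
    (∀ j₀ : Fin (r + 1),
      a j₀ + c j₀.rev < d - 1 →
      (∀ j : Fin (r + 1), a j + c j.rev < d - 1 → a₂ j + b j.rev ≤ a₂ j₀ + b j₀.rev) →
      (∀ j : Fin (r + 1), a j + c j.rev < d - 1 →
        a₂ j + b j.rev = a₂ j₀ + b j₀.rev → j₀ ≤ j) →
      (d - (g - 1) < a₂ j₀ + b j₀.rev ∧
        (j₀ = 0 ∨ ∀ i : Fin (r + 1), (i : ℕ) + 1 = (j₀ : ℕ) → a₂ i < a₂ j₀ - 1) ∧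
        (IsVanishingSeq r d (Function.update c j₀.rev (c j₀.rev + 1)) ∧
          IsVanishingSeq r d (Function.update a₂ j₀ (a₂ j₀ - 1)) ∧
          (∀ j : Fin (r + 1), Function.update c j₀.rev (c j₀.rev + 1) j +
            Function.update a₂ j₀ (a₂ j₀ - 1) j.rev = d) ∧
          0 ≤ BNrhoHat 1 r d a (Function.update c j₀.rev (c j₀.rev + 1)) ∧
          0 < BNrhoHat (g - 1) r d (Function.update a₂ j₀ (a₂ j₀ - 1)) b))) := by
  have hexists := exists_index_of_BNrhoHat_eq_zero ha₂def hρ hρ₁ hρ₂ hcond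
  refine ⟨hexists, fun j₀ hj₀ hmax hmin => ?_⟩
  have ha₂ : IsVanishingSeq r d a₂ := (funext ha₂def : a₂ = _) ▸ hc.complement
  obtain ⟨j, hj, hadm⟩ := hexists
  have hexcess : d - (g - 1) < a₂ j₀ + b j₀.rev := hj.trans_le (hmax j hadm)
  have hgap := pred_lt_sub_one_of_minimal_argmax ha.1 hb.1 ha₂.1 ha₂def hj₀ hmax hmin
  have ha₂' : IsVanishingSeq r d (update a₂ j₀ (a₂ j₀ - 1)) := by
    refine ha₂.update_sub_one ?_ hgap
    linarith [ha₂def j₀, ha.2.1, ha.1.monotone (Fin.zero_le j₀)]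
  have hc' : update c j₀.rev (c j₀.rev + 1) = fun j => d - update a₂ j₀ (a₂ j₀ - 1) j.rev := by
    ext j
    rcases eq_or_ne j j₀.rev with rfl | hj
    · simp only [update_self, Fin.rev_rev, ha₂def]
      ring
    · rw [update_of_ne hj, update_of_ne (Fin.rev_eq_iff.not.mpr hj), ha₂def, Fin.rev_rev]
      ring
  refine ⟨hexcess, Or.inr hgap, hc' ▸ ha₂'.complement, ha₂', fun j => by simp [hc'], ?_, ?_⟩
  · rw [BNrhoHat_comm, BNrhoHat_update_add_one (by simpa [add_comm] using hj₀), BNrhoHat_comm, hρ₁]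
  · rw [BNrhoHat_update_sub_one hexcess, hρ₂]
    exact one_pos

/-- Second type of move, case ρ̂₁ = 0: `g ≥ 2`, `a`, `b`, `c` vanishing
sequences, `a²` the complementary sequence of `c` (`a²ⱼ = d - c_{r-j}`),
`ρ̂(g,d;a,b) ≥ 1`, `ρ̂(1,d;a,c) = 0`, `ρ̂(g-1,d;a²,b) = 0`, and every index `j` with
`aⱼ + c_{r-j} = d` satisfies `a²ⱼ + b_{r-j} ≥ d - (g-1)`. Then:
(i) there is an index `j` with `a²ⱼ + b_{r-j} > d - (g-1)` and `aⱼ + c_{r-j} < d - 1`;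
(ii) for `j₀` the minimal index maximizing `a²ⱼ + b_{r-j}` among indices with
`aⱼ + c_{r-j} < d - 1`: `a²_{j₀} + b_{r-j₀} > d - (g-1)`, and either `j₀ = 0` or
`a²_{j₀-1} < a²_{j₀} - 1`; and
(iii) replacing `c_{r-j₀}` by `c_{r-j₀} + 1` and `a²_{j₀}` by `a²_{j₀} - 1` yields
complementary vanishing sequences `c'`, `a²'` with `ρ̂(1,d;a,c') ≥ 0` and
`ρ̂(g-1,d;a²',b) > 0`. -/
theorem second_move_zero (r : ℕ) (d : ℤ) (hd : 0 ≤ d) (g : ℤ) (hg : 2 ≤ g)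
    (a b c a₂ : Fin (r + 1) → ℤ)
    (ha : IsVanishingSeq r d a) (hb : IsVanishingSeq r d b) (hc : IsVanishingSeq r d c)
    (ha₂def : ∀ j : Fin (r + 1), a₂ j = d - c j.rev)
    (hρ : 1 ≤ BNrhoHat g r d a b)
    (hρ₁ : BNrhoHat 1 r d a c = 0) (hρ₂ : BNrhoHat (g - 1) r d a₂ b = 0)
    (hcond : ∀ j : Fin (r + 1), a j + c j.rev = d → d - (g - 1) ≤ a₂ j + b j.rev) :
    (∃ j : Fin (r + 1), d - (g - 1) < a₂ j + b j.rev ∧ a j + c j.rev < d - 1) ∧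
    (∀ j₀ : Fin (r + 1),
      a j₀ + c j₀.rev < d - 1 →
      (∀ j : Fin (r + 1), a j + c j.rev < d - 1 → a₂ j + b j.rev ≤ a₂ j₀ + b j₀.rev) →
      (∀ j : Fin (r + 1), a j + c j.rev < d - 1 →
        a₂ j + b j.rev = a₂ j₀ + b j₀.rev → j₀ ≤ j) →
      (d - (g - 1) < a₂ j₀ + b j₀.rev ∧
        (j₀ = 0 ∨ ∀ i : Fin (r + 1), (i : ℕ) + 1 = (j₀ : ℕ) → a₂ i < a₂ j₀ - 1) ∧
        (IsVanishingSeq r d (Function.update c j₀.rev (c j₀.rev + 1)) ∧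
          IsVanishingSeq r d (Function.update a₂ j₀ (a₂ j₀ - 1)) ∧
          (∀ j : Fin (r + 1), Function.update c j₀.rev (c j₀.rev + 1) j +
            Function.update a₂ j₀ (a₂ j₀ - 1) j.rev = d) ∧
          0 ≤ BNrhoHat 1 r d a (Function.update c j₀.rev (c j₀.rev + 1)) ∧
          0 < BNrhoHat (g - 1) r d (Function.update a₂ j₀ (a₂ j₀ - 1)) b))) :=
  second_move_zero_general r d g a b c a₂ ha hb hc ha₂def hρ hρ₁ hρ₂ hcond
end

section
/- (Combinatorial connectedness of the set of complementary splittings.) Let g ≥ 2 be an integer and a_•, b_• vanishing sequences of rank r and degree d with ρ̂(g,d;a_•,b_•) ≥ 1. Let S be the set of vanishing sequences c_• of rank r and degree d such that ρ̂(1,d;a_•,c_•) ≥ 0 and ρ̂(g−1,d;a²(c)_•,b_•) ≥ 0, where a²(c)_j = d − c_{r−j}. Consider the graph with vertex set S in which two sequences are adjacent if and only if they differ in exactly one index, and at that index they differ by exactly 1. Then this graph is connected, i.e., any two elements of S are joined by a path of such single-entry moves staying within S. -/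
/-- Two sequences are adjacent if they differ in exactly one index, and at that index
they differ by exactly 1. -/
def AdjSeq (r : ℕ) (c c' : Fin (r + 1) → ℤ) : Prop :=
  ∃ j : Fin (r + 1), (c' j - c j = 1 ∨ c j - c' j = 1) ∧ ∀ i : Fin (r + 1), i ≠ j → c i = c' i

/-!
Let `t = a²(a) - 1`, i.e. `t i = d - 1 - a_{r-i}`. The condition `ρ̂(1,d;a,c) ≥ 0` says that
`c ≤ t` except at one index at most, where `c` exceeds `t` by one, while `ρ̂(g-1,d;a²(c),b)` is
monotone in `c`. The hypothesis `ρ̂(g,d;a,b) ≥ 1` is exactly `ρ̂(g-1,d;a²(t),b) ≥ 0`, so `t ∈ S`.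
From any `c ∈ S`, raising by one the last entry of `c` lying below `t` keeps `c` strictly
increasing and in `S`; once `c ≥ t`, the first condition leaves only `c = t` or a neighbour of
`t`. So every element of `S` is joined to `t`.
-/

open Finset Function

variable {r : ℕ} {d g : ℤ} {a b c : Fin (r + 1) → ℤ}

def upperSeq (d : ℤ) (a : Fin (r + 1) → ℤ) : Fin (r + 1) → ℤ :=
  fun i => d - 1 - a i.rev

def splittings (r : ℕ) (d g : ℤ) (a b : Fin (r + 1) → ℤ) : Set (Fin (r + 1) → ℤ) :=
  {c | IsVanishingSeq r d c ∧ 0 ≤ BNrhoHat 1 r d a c ∧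
    0 ≤ BNrhoHat (g - 1) r d (fun j => d - c j.rev) b}

def MoveRel (S : Set (Fin (r + 1) → ℤ)) (x y : Fin (r + 1) → ℤ) : Prop :=
  x ∈ S ∧ y ∈ S ∧ AdjSeq r x y

theorem AdjSeq.symm {c c' : Fin (r + 1) → ℤ} (h : AdjSeq r c c') : AdjSeq r c' c := by
  obtain ⟨j, hj, hne⟩ := h
  exact ⟨j, hj.symm, fun i hi => (hne i hi).symm⟩

instance (S : Set (Fin (r + 1) → ℤ)) : Std.Symm (MoveRel S) where
  symm _ _ := fun ⟨hx, hy, hxy⟩ => ⟨hy, hx, hxy.symm⟩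

theorem adjSeq_update_add_one (c : Fin (r + 1) → ℤ) (k : Fin (r + 1)) :
    AdjSeq r c (update c k (c k + 1)) :=
  ⟨k, Or.inl (by simp), fun i hi => (update_of_ne hi _ c).symm⟩

theorem BNrhoHat_eq_sub_sum :
    BNrhoHat g r d a c = g - ∑ i, max (c i + a i.rev - (d - g)) 0 := by
  rw [BNrhoHat, ← Equiv.sum_comp Fin.revPerm]
  simp only [Fin.revPerm_apply, Fin.rev_rev, add_comm]

theorem BNrhoHat_compl_left :
    BNrhoHat g r d (fun j => d - c j.rev) b = g - ∑ i, max (b i + g - c i) 0 := by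
  rw [BNrhoHat, ← Equiv.sum_comp Fin.revPerm]
  congr 1
  refine Fintype.sum_congr _ _ fun i => ?_
  simp only [Fin.revPerm_apply, Fin.rev_rev]
  ring_nf

theorem BNrhoHat_compl_left_mono {c c' : Fin (r + 1) → ℤ} (h : c ≤ c') :
    BNrhoHat g r d (fun j => d - c j.rev) b ≤ BNrhoHat g r d (fun j => d - c' j.rev) b := by
  rw [BNrhoHat_compl_left, BNrhoHat_compl_left]
  gcongr with i
  exact h i

theorem BNrhoHat_compl_upperSeq :
    BNrhoHat (g - 1) r d (fun j => d - upperSeq d a j.rev) b = BNrhoHat g r d a b - 1 := by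
  simp only [BNrhoHat, upperSeq, Fin.rev_rev]
  ring_nf

theorem BNrhoHat_one_nonneg_iff :
    0 ≤ BNrhoHat 1 r d a c ↔ ∑ i, max (c i - upperSeq d a i) 0 ≤ 1 := by
  have h i : c i + a i.rev - (d - 1) = c i - upperSeq d a i := by simp only [upperSeq]; ring
  simp only [BNrhoHat_eq_sub_sum, sub_nonneg, h]

theorem le_upperSeq_of_one_le_BNrhoHat (hρ : 1 ≤ BNrhoHat g r d a b) : b ≤ upperSeq d a := by
  intro i
  rw [BNrhoHat_eq_sub_sum] at hρ
  have hi := single_le_sum (f := fun i => max (b i + a i.rev - (d - g)) 0)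
    (fun _ _ => le_max_right _ _) (mem_univ i)
  have := le_max_left (b i + a i.rev - (d - g)) 0
  simp only [upperSeq]
  linarith

theorem IsVanishingSeq.upperSeq (ha : IsVanishingSeq r d a) (h0 : 0 ≤ upperSeq d a 0) :
    IsVanishingSeq r d (upperSeq d a) := by
  refine ⟨fun i j hij => ?_, h0, ?_⟩
  · have := ha.1 (Fin.rev_lt_rev.mpr hij)
    simp only [_root_.upperSeq]
    omega
  · simp only [_root_.upperSeq, Fin.rev_last]
    linarith [ha.2.1]

theorem le_update_add_one (c : Fin (r + 1) → ℤ) (k : Fin (r + 1)) : c ≤ update c k (c k + 1) := by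
  intro i
  rcases eq_or_ne i k with rfl | hi
  · simp
  · rw [update_of_ne hi]

theorem IsVanishingSeq.update_add_one {t : Fin (r + 1) → ℤ} (hc : IsVanishingSeq r d c)
    (ht : IsVanishingSeq r d t) {k : Fin (r + 1)} (hk : c k < t k)
    (hmax : ∀ j, k < j → t j ≤ c j) : IsVanishingSeq r d (update c k (c k + 1)) := by
  refine ⟨fun i j hij => ?_, hc.2.1.trans (le_update_add_one c k 0), ?_⟩
  · rcases eq_or_ne i k with rfl | hi
    · rw [update_self, update_of_ne hij.ne']
      linarith [ht.1 hij, hmax j hij]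
    · rw [update_of_ne hi]
      exact (hc.1 hij).trans_le (le_update_add_one c k j)
  · rcases eq_or_ne (Fin.last r) k with rfl | hl
    · rw [update_self]
      linarith [ht.2.2]
    · rw [update_of_ne hl]
      exact hc.2.2

theorem sum_max_sub_update_add_one {t : Fin (r + 1) → ℤ} {k : Fin (r + 1)} (hk : c k < t k) :
    ∑ i, max (update c k (c k + 1) i - t i) 0 = ∑ i, max (c i - t i) 0 := by
  refine Fintype.sum_congr _ _ fun i => ?_
  rcases eq_or_ne i k with rfl | hi
  · simp only [update_self]
    rw [max_eq_right (by omega), max_eq_right (by omega)]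
  · rw [update_of_ne hi]

theorem sum_toNat_sub_update_add_one_lt {t : Fin (r + 1) → ℤ} {k : Fin (r + 1)} (hk : c k < t k) :
    ∑ i, (t i - update c k (c k + 1) i).toNat < ∑ i, (t i - c i).toNat := by
  refine sum_lt_sum (fun i _ => ?_) ⟨k, mem_univ k, ?_⟩
  · rcases eq_or_ne i k with rfl | hi
    · simp only [update_self]
      omega
    · rw [update_of_ne hi]
  · simp only [update_self]
    omega

theorem eq_or_adjSeq_of_le_of_sum_max_sub_le_one {t : Fin (r + 1) → ℤ} (hle : ∀ i, t i ≤ c i)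
    (hsum : ∑ i, max (c i - t i) 0 ≤ 1) : c = t ∨ AdjSeq r c t := by
  by_cases hct : c = t
  · exact Or.inl hct
  obtain ⟨j, hj⟩ := Function.ne_iff.mp hct
  have hterm (i : Fin (r + 1)) : max (c i - t i) 0 = c i - t i := max_eq_left (by linarith [hle i])
  simp only [hterm] at hsum
  have hpair (i : Fin (r + 1)) (hij : i ≠ j) : c i - t i + (c j - t j) ≤ 1 := by
    rw [← sum_pair (f := fun x => c x - t x) hij]
    exact (sum_le_sum_of_subset_of_nonneg (subset_univ _)
      fun x _ _ => by linarith [hle x]).trans hsum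
  refine Or.inr ⟨j, Or.inr ?_, fun i hij => ?_⟩
  · have := hle j
    have := single_le_sum (fun x _ => by linarith [hle x]) (mem_univ j) |>.trans hsum
    omega
  · have := hle i
    have := hle j
    have := hpair i hij
    omega

theorem reflTransGen_moveRel_of_raise {S : Set (Fin (r + 1) → ℤ)} {t : Fin (r + 1) → ℤ}
    (hraise : ∀ c ∈ S, ∀ k, c k < t k → (∀ j, k < j → t j ≤ c j) → update c k (c k + 1) ∈ S)
    (hfinal : ∀ c ∈ S, (∀ i, t i ≤ c i) → Relation.ReflTransGen (MoveRel S) c t) :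
    ∀ c ∈ S, Relation.ReflTransGen (MoveRel S) c t := by
  intro c hc
  induction h : ∑ i, (t i - c i).toNat using Nat.strong_induction_on generalizing c with
  | _ n ih =>
  by_cases hle : ∀ i, t i ≤ c i
  · exact hfinal c hc hle
  obtain ⟨i, hi⟩ := not_forall.mp hle
  obtain ⟨k, hk, hmax⟩ := (univ.filter fun i => c i < t i).exists_max_image id
    ⟨i, by simpa using hi⟩
  rw [mem_filter] at hk
  have hmax' (j) (hkj : k < j) : t j ≤ c j := by
    by_contra! hj
    exact (hmax j (by simp [hj])).not_gt hkj
  have hc' := hraise c hc k hk.2 hmax'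
  exact .head ⟨hc, hc', adjSeq_update_add_one c k⟩
    (ih _ (h ▸ sum_toNat_sub_update_add_one_lt hk.2) _ hc' rfl)

theorem upperSeq_mem_splittings (ha : IsVanishingSeq r d a) (hb : IsVanishingSeq r d b)
    (hρ : 1 ≤ BNrhoHat g r d a b) : upperSeq d a ∈ splittings r d g a b := by
  have hbt := le_upperSeq_of_one_le_BNrhoHat hρ
  refine ⟨ha.upperSeq (hb.2.1.trans (hbt 0)), ?_, ?_⟩
  · simp [BNrhoHat_one_nonneg_iff]
  · rw [BNrhoHat_compl_upperSeq]
    linarith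

theorem update_mem_splittings (ht : IsVanishingSeq r d (upperSeq d a))
    (hc : c ∈ splittings r d g a b) {k : Fin (r + 1)} (hk : c k < upperSeq d a k)
    (hmax : ∀ j, k < j → upperSeq d a j ≤ c j) :
    update c k (c k + 1) ∈ splittings r d g a b := by
  obtain ⟨hcv, hc₁, hc₂⟩ := hc
  refine ⟨hcv.update_add_one ht hk hmax, ?_, ?_⟩
  · rwa [BNrhoHat_one_nonneg_iff, sum_max_sub_update_add_one hk, ← BNrhoHat_one_nonneg_iff]
  · exact hc₂.trans (BNrhoHat_compl_left_mono (le_update_add_one c k))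

theorem reflTransGen_upperSeq_of_le (ht : upperSeq d a ∈ splittings r d g a b)
    (hc : c ∈ splittings r d g a b) (hle : ∀ i, upperSeq d a i ≤ c i) :
    Relation.ReflTransGen (MoveRel (splittings r d g a b)) c (upperSeq d a) := by
  rcases eq_or_adjSeq_of_le_of_sum_max_sub_le_one hle (BNrhoHat_one_nonneg_iff.mp hc.2.1)
    with rfl | hadj
  · exact .refl
  · exact .single ⟨hc, ht, hadj⟩

theorem splittings_connected_general (r : ℕ) (d : ℤ) (g : ℤ)
    (a b : Fin (r + 1) → ℤ)
    (ha : IsVanishingSeq r d a) (hb : IsVanishingSeq r d b)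
    (hρ : 1 ≤ BNrhoHat g r d a b)
    (S : Set (Fin (r + 1) → ℤ))
    (hS : S = {c | IsVanishingSeq r d c ∧ 0 ≤ BNrhoHat 1 r d a c ∧
      0 ≤ BNrhoHat (g - 1) r d (fun j => d - c j.rev) b}) :
    ∀ c ∈ S, ∀ c' ∈ S,
      Relation.ReflTransGen (fun x y => x ∈ S ∧ y ∈ S ∧ AdjSeq r x y) c c' := by
  obtain rfl : S = splittings r d g a b := hS
  have ht := upperSeq_mem_splittings ha hb hρ
  have hreach := reflTransGen_moveRel_of_raise
    (fun c hc _ => update_mem_splittings ht.1 hc) (fun c hc => reflTransGen_upperSeq_of_le ht hc)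
  intro c hc c' hc'
  exact (hreach c hc).trans (Std.Symm.symm _ _ (hreach c' hc'))

/-- Combinatorial connectedness of the set of complementary splittings:
for `g ≥ 2` and vanishing sequences `a`, `b` with `ρ̂(g,d;a,b) ≥ 1`, the graph on the set
`S` of vanishing sequences `c` with `ρ̂(1,d;a,c) ≥ 0` and `ρ̂(g-1,d;a²(c),b) ≥ 0`
(where `a²(c)ⱼ = d - c_{r-j}`), with edges the single-entry moves changing one entry by 1,
is connected: any two elements of `S` are joined by a path of such moves staying in `S`. -/
theorem splittings_connected (r : ℕ) (d : ℤ) (hd : 0 ≤ d) (g : ℤ) (hg : 2 ≤ g)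
    (a b : Fin (r + 1) → ℤ)
    (ha : IsVanishingSeq r d a) (hb : IsVanishingSeq r d b)
    (hρ : 1 ≤ BNrhoHat g r d a b)
    (S : Set (Fin (r + 1) → ℤ))
    (hS : S = {c | IsVanishingSeq r d c ∧ 0 ≤ BNrhoHat 1 r d a c ∧
      0 ≤ BNrhoHat (g - 1) r d (fun j => d - c j.rev) b}) :
    ∀ c ∈ S, ∀ c' ∈ S,
      Relation.ReflTransGen (fun x y => x ∈ S ∧ y ∈ S ∧ AdjSeq r x y) c c' :=
  splittings_connected_general r d g a b ha hb hρ S hS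
end

section
/- Let g ≥ 2 be an integer and a_•, b_• vanishing sequences of rank r and degree d with ρ̂(g,d;a_•,b_•) ≥ 1. Suppose there exists at least one vanishing sequence c_• of rank r and degree d with ρ̂(1,d;a_•,c_•) ≥ 0 and ρ̂(g−1,d;a²(c)_•,b_•) ≥ 0, where a²(c)_j = d − c_{r−j}. Then there exists a vanishing sequence c_• of rank r and degree d with ρ̂(1,d;a_•,c_•) ≥ 0 and ρ̂(g−1,d;a²(c)_•,b_•) > 0. -/
/-!
Take `c k = min (b k + g - 1) (d - 1 - a_{r-k})`, the largest choice that costs nothing in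
genus `1`. Since `max x 0 + max y 0 = max (x + y) 0` when `x` and `y` have the same sign,
`ρ̂(1;a,c) + ρ̂(g-1;a²(c),b) = ρ̂(g;a,b)` for this `c`, with `ρ̂(1;a,c) = 1`. If some summand
of `ρ̂(g;a,b)` is positive, raising `c` to `d - a_{r-J}` at the largest such index `J` keeps
the additivity and moves the unit of `ρ̂(1;a,c)` to the other side, which becomes
`ρ̂(g;a,b) ≥ 1`. Otherwise `ρ̂(g;a,b) = g`, so the other side is already `g - 1 ≥ 1`.
-/

theorem max_zero_add_max_zero_of_same_sign {α : Type*} [AddCommGroup α] [LinearOrder α]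
    [IsOrderedAddMonoid α] {x y : α} (h : (0 ≤ x ∧ 0 ≤ y) ∨ (x ≤ 0 ∧ y ≤ 0)) :
    max x 0 + max y 0 = max (x + y) 0 := by
  rcases h with ⟨hx, hy⟩ | ⟨hx, hy⟩
  · rw [max_eq_left hx, max_eq_left hy, max_eq_left (add_nonneg hx hy)]
  · rw [max_eq_right hx, max_eq_right hy, max_eq_right (add_nonpos hx hy), add_zero]

section Splitting

variable {r : ℕ} {d g : ℤ} {a b : Fin (r + 1) → ℤ}

theorem IsVanishingSeq.nonneg (ha : IsVanishingSeq r d a) (k : Fin (r + 1)) : 0 ≤ a k :=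
  ha.2.1.trans (ha.1.monotone (Fin.zero_le k))

theorem IsVanishingSeq.le_degree (ha : IsVanishingSeq r d a) (k : Fin (r + 1)) : a k ≤ d :=
  (ha.1.monotone (Fin.le_last k)).trans ha.2.2

theorem max_le_sub_BNrhoHat (j : Fin (r + 1)) :
    max (a j + b j.rev - (d - g)) 0 ≤ g - BNrhoHat g r d a b := by
  have := Finset.single_le_sum (f := fun j => max (a j + b j.rev - (d - g)) 0)
    (fun j _ => le_max_right _ 0) (Finset.mem_univ j)
  unfold BNrhoHat
  linarith

theorem last_lt_degree_of_one_le_BNrhoHat (hb : IsVanishingSeq r d b)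
    (hρ : 1 ≤ BNrhoHat g r d a b) : a (Fin.last r) < d := by
  have hterm := max_le_sub_BNrhoHat (a := a) (b := b) (d := d) (g := g) (Fin.last r)
  have := hb.nonneg 0
  rw [Fin.rev_last] at hterm
  omega

theorem BNrhoHat_eq_self_of_forall_le (h : ∀ j, a j + b j.rev ≤ d - g) :
    BNrhoHat g r d a b = g := by
  unfold BNrhoHat
  rw [Finset.sum_eq_zero fun j _ => max_eq_right (by linarith [h j]), sub_zero]

theorem BNrhoHat_add_BNrhoHat_complement (h : ℤ) (c : Fin (r + 1) → ℤ)
    (hsign : ∀ j, (0 ≤ a j + c j.rev - (d - h) ∧ 0 ≤ d - c j.rev + b j.rev - (d - (g - h))) ∨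
      (a j + c j.rev - (d - h) ≤ 0 ∧ d - c j.rev + b j.rev - (d - (g - h)) ≤ 0)) :
    BNrhoHat h r d a c + BNrhoHat (g - h) r d (fun j => d - c j.rev) b = BNrhoHat g r d a b := by
  have hsum : ∑ j : Fin (r + 1), (max (a j + c j.rev - (d - h)) 0 +
      max (d - c j.rev + b j.rev - (d - (g - h))) 0) =
      ∑ j : Fin (r + 1), max (a j + b j.rev - (d - g)) 0 := by
    refine Finset.sum_congr rfl fun j _ => ?_
    rw [max_zero_add_max_zero_of_same_sign (hsign j)]
    ring_nf
  unfold BNrhoHat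
  rw [← hsum, Finset.sum_add_distrib]
  ring

def baseSplitting (d g : ℤ) (a b : Fin (r + 1) → ℤ) : Fin (r + 1) → ℤ :=
  fun k => min (b k + g - 1) (d - 1 - a k.rev)

theorem baseSplitting_strictMono (ha : StrictMono a) (hb : StrictMono b) :
    StrictMono (baseSplitting d g a b) := fun i k hik =>
  have := ha (Fin.rev_lt_rev.mpr hik)
  have := hb hik
  by simp only [baseSplitting]; omega

theorem isVanishingSeq_baseSplitting (hg : 1 ≤ g) (ha : IsVanishingSeq r d a)
    (hb : IsVanishingSeq r d b) (hlast : a (Fin.last r) < d) :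
    IsVanishingSeq r d (baseSplitting d g a b) := by
  refine ⟨baseSplitting_strictMono ha.1 hb.1, ?_, ?_⟩
  · have := hb.nonneg 0
    simp only [baseSplitting, Fin.rev_zero]
    omega
  · have := ha.nonneg 0
    simp only [baseSplitting, Fin.rev_last]
    omega

theorem BNrhoHat_baseSplitting : BNrhoHat 1 r d a (baseSplitting d g a b) = 1 := by
  unfold BNrhoHat
  rw [Finset.sum_eq_zero fun j _ => ?_, sub_zero]
  simp only [baseSplitting, Fin.rev_rev]
  omega

theorem BNrhoHat_complement_baseSplitting :
    BNrhoHat (g - 1) r d (fun j => d - baseSplitting d g a b j.rev) b =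
      BNrhoHat g r d a b - 1 := by
  have hsplit := BNrhoHat_add_BNrhoHat_complement (a := a) (b := b) (d := d) (g := g) 1
    (baseSplitting d g a b) fun j => by
    simp only [baseSplitting, Fin.rev_rev]
    omega
  rw [BNrhoHat_baseSplitting] at hsplit
  linarith

def bumpedSplitting (d g : ℤ) (a b : Fin (r + 1) → ℤ) (J : Fin (r + 1)) : Fin (r + 1) → ℤ :=
  Function.update (baseSplitting d g a b) J (d - a J.rev)

variable {J : Fin (r + 1)}

/-- Maximality of `J` is what keeps the bumped value below the later entries. -/
theorem bumpedSplitting_strictMono (ha : StrictMono a) (hb : StrictMono b)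
    (hJ : Maximal (fun k => 0 < a k.rev + b k - (d - g)) J) :
    StrictMono (bumpedSplitting d g a b J) := by
  intro i k hik
  simp only [bumpedSplitting, Function.update_apply]
  split_ifs with hi hk hk
  · exact (hik.ne (hi.trans hk.symm)).elim
  · subst hi
    have hk_nonpos : ¬ 0 < a k.rev + b k - (d - g) := fun hpos => hik.not_ge (hJ.2 hpos hik.le)
    have := hJ.1
    have := hb hik
    simp only [baseSplitting]
    omega
  · subst hk
    have := ha (Fin.rev_lt_rev.mpr hik)
    simp only [baseSplitting]
    omega
  · exact baseSplitting_strictMono ha hb hik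

theorem isVanishingSeq_bumpedSplitting (hg : 1 ≤ g) (ha : IsVanishingSeq r d a)
    (hb : IsVanishingSeq r d b) (hlast : a (Fin.last r) < d)
    (hJ : Maximal (fun k => 0 < a k.rev + b k - (d - g)) J) :
    IsVanishingSeq r d (bumpedSplitting d g a b J) := by
  have hbase := isVanishingSeq_baseSplitting (g := g) hg ha hb hlast
  refine ⟨bumpedSplitting_strictMono ha.1 hb.1 hJ, ?_, ?_⟩
  · have := ha.le_degree J.rev
    have := hbase.2.1
    simp only [bumpedSplitting, Function.update_apply]
    split_ifs <;> omega
  · have := ha.nonneg J.rev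
    have := hbase.2.2
    simp only [bumpedSplitting, Function.update_apply]
    split_ifs <;> omega

theorem BNrhoHat_bumpedSplitting : BNrhoHat 1 r d a (bumpedSplitting d g a b J) = 0 := by
  have hterm : ∀ j, max (a j + bumpedSplitting d g a b J j.rev - (d - 1)) 0 =
      (Pi.single J.rev 1 : Fin (r + 1) → ℤ) j := by
    intro j
    rcases eq_or_ne j J.rev with rfl | hj
    · simp only [bumpedSplitting, Fin.rev_rev, Function.update_self, Pi.single_eq_same]
      omega
    · have hjJ : j.rev ≠ J := fun h => hj (h ▸ (Fin.rev_rev j).symm)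
      simp only [bumpedSplitting, Function.update_of_ne hjJ, Pi.single_eq_of_ne hj,
        baseSplitting, Fin.rev_rev]
      omega
  unfold BNrhoHat
  simp only [hterm, Finset.sum_pi_single', Finset.mem_univ, if_true, sub_self]

theorem BNrhoHat_complement_bumpedSplitting (hJ : 0 < a J.rev + b J - (d - g)) :
    BNrhoHat (g - 1) r d (fun j => d - bumpedSplitting d g a b J j.rev) b =
      BNrhoHat g r d a b := by
  have hsplit := BNrhoHat_add_BNrhoHat_complement (a := a) (b := b) (d := d) (g := g) 1
    (bumpedSplitting d g a b J) fun j => by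
    rcases eq_or_ne j J.rev with rfl | hj
    · simp only [bumpedSplitting, Fin.rev_rev, Function.update_self]
      omega
    · have hjJ : j.rev ≠ J := fun h => hj (h ▸ (Fin.rev_rev j).symm)
      simp only [bumpedSplitting, Function.update_of_ne hjJ, baseSplitting, Fin.rev_rev]
      omega
  rw [BNrhoHat_bumpedSplitting, zero_add] at hsplit
  exact hsplit

end Splitting

theorem exists_splitting_pos_general (r : ℕ) (d : ℤ) (g : ℤ) (hg : 2 ≤ g)
    (a b : Fin (r + 1) → ℤ)
    (ha : IsVanishingSeq r d a) (hb : IsVanishingSeq r d b)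
    (hρ : 1 ≤ BNrhoHat g r d a b) :
    ∃ c : Fin (r + 1) → ℤ, IsVanishingSeq r d c ∧ 0 ≤ BNrhoHat 1 r d a c ∧
      0 < BNrhoHat (g - 1) r d (fun j => d - c j.rev) b := by
  have hlast := last_lt_degree_of_one_le_BNrhoHat hb hρ
  by_cases hpos : ∃ k, 0 < a k.rev + b k - (d - g)
  · obtain ⟨J, hJ⟩ := (Set.toFinite {k | 0 < a k.rev + b k - (d - g)}).exists_maximal hpos
    refine ⟨bumpedSplitting d g a b J,
      isVanishingSeq_bumpedSplitting (by omega) ha hb hlast hJ, ?_, ?_⟩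
    · rw [BNrhoHat_bumpedSplitting]
    · rw [BNrhoHat_complement_bumpedSplitting hJ.1]
      omega
  · refine ⟨baseSplitting d g a b, isVanishingSeq_baseSplitting (by omega) ha hb hlast,
      by rw [BNrhoHat_baseSplitting]; omega, ?_⟩
    have hall : ∀ j, a j + b j.rev ≤ d - g := fun j => by
      have := not_exists.mp hpos j.rev
      rw [Fin.rev_rev] at this
      omega
    rw [BNrhoHat_complement_baseSplitting, BNrhoHat_eq_self_of_forall_le hall]
    omega

/-- for `g ≥ 2` and vanishing sequences `a`, `b` with `ρ̂(g,d;a,b) ≥ 1`,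
if there is a vanishing sequence `c` with `ρ̂(1,d;a,c) ≥ 0` and `ρ̂(g-1,d;a²(c),b) ≥ 0`
(where `a²(c)ⱼ = d - c_{r-j}`), then there is one with `ρ̂(1,d;a,c) ≥ 0` and
`ρ̂(g-1,d;a²(c),b) > 0`. -/
theorem exists_splitting_pos (r : ℕ) (d : ℤ) (hd : 0 ≤ d) (g : ℤ) (hg : 2 ≤ g)
    (a b : Fin (r + 1) → ℤ)
    (ha : IsVanishingSeq r d a) (hb : IsVanishingSeq r d b)
    (hρ : 1 ≤ BNrhoHat g r d a b)
    (hex : ∃ c : Fin (r + 1) → ℤ, IsVanishingSeq r d c ∧ 0 ≤ BNrhoHat 1 r d a c ∧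
      0 ≤ BNrhoHat (g - 1) r d (fun j => d - c j.rev) b) :
    ∃ c : Fin (r + 1) → ℤ, IsVanishingSeq r d c ∧ 0 ≤ BNrhoHat 1 r d a c ∧
      0 < BNrhoHat (g - 1) r d (fun j => d - c j.rev) b :=
  exists_splitting_pos_general r d g hg a b ha hb hρ
end
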